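/- If a non-crossing diagram D of Dynkin type D_n contains two distinct diameters of the same colour, say (i,i+n) and (j,j+n) with i ≢ j mod n, then every coloured diameter in nc D \ D is replaced by a pair of radii under r_D; consequently no diameter of nc D \ D has a diameter as its r_D-image. -/

import Mathlib

open scoped Classical

namespace DynkinD

/-- Vertices of the regular `2n`-gon, labelled by `ZMod (2*n)`. -/
abbrev Vtx (n : ℕ) := ZMod (2 * n)

/-- The element `n` of `ZMod (2*n)`, i.e. rotation by π. -/
def dN (n : ℕ) : Vtx n := (n : ZMod (2 * n))

/-- `x` lies strictly between `a` and `b` in anticlockwise order. -/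
def btw (n : ℕ) (a x b : Vtx n) : Prop :=
  0 < (x - a).val ∧ (x - a).val < (b - a).val

/-- The arcs `(i,j)` and `(k,l)` cross: the four vertices are pairwise distinct and
appear in anticlockwise cyclic order `i,k,j,l` or `k,i,l,j`. -/
def crosses (n : ℕ) (i j k l : Vtx n) : Prop :=
  (i ≠ j ∧ i ≠ k ∧ i ≠ l ∧ j ≠ k ∧ j ≠ l ∧ k ≠ l) ∧
  ((btw n i k j ∧ btw n j l i) ∨ (btw n k i l ∧ btw n l j k))

/-- Elements of the combinatorial model: pairs of arcs, coloured diameters,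
and coloured pairs of radii (through the centre). -/
inductive RElt (n : ℕ) where
  | pairArc (i j : Vtx n)
  | diam (i : Vtx n) (c : Bool)
  | radii (i : Vtx n) (c : Bool)

def isRadii {n : ℕ} : RElt n → Prop
  | .radii _ _ => True
  | _ => False

/-- Crossing of elements (colour-aware: diameters of the same colour never cross;
a pair of radii crosses another element iff the corresponding diameter does;
two pairs of radii never cross). -/
def crossElt (n : ℕ) : RElt n → RElt n → Prop
  | .pairArc i j, .pairArc k l => crosses n i j k l ∨ crosses n i j (k + dN n) (l + dN n)
  | .pairArc i j, .diam k _ => crosses n i j k (k + dN n)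
  | .diam k _, .pairArc i j => crosses n i j k (k + dN n)
  | .diam i c, .diam j c' => c ≠ c' ∧ crosses n i (i + dN n) j (j + dN n)
  | .radii i _, .pairArc k l => crosses n k l i (i + dN n)
  | .pairArc k l, .radii i _ => crosses n k l i (i + dN n)
  | .radii i c, .diam j c' => c ≠ c' ∧ crosses n i (i + dN n) j (j + dN n)
  | .diam j c', .radii i c => c ≠ c' ∧ crosses n i (i + dN n) j (j + dN n)
  | .radii _ _, .radii _ _ => False

/-- Crossing exactly once. -/
def crossOnceElt (n : ℕ) : RElt n → RElt n → Prop
  | .pairArc i j, .pairArc k l => Xor' (crosses n i j k l) (crosses n i j (k + dN n) (l + dN n))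
  | x, y => crossElt n x y

/-- Plain (colour-blind) geometric crossing of the underlying segments. -/
def geomCross (n : ℕ) : RElt n → RElt n → Prop
  | .pairArc i j, .pairArc k l => crosses n i j k l ∨ crosses n i j (k + dN n) (l + dN n)
  | .pairArc i j, .diam k _ => crosses n i j k (k + dN n)
  | .diam k _, .pairArc i j => crosses n i j k (k + dN n)
  | .diam i _, .diam j _ => crosses n i (i + dN n) j (j + dN n)
  | .radii i _, .pairArc k l => crosses n k l i (i + dN n)
  | .pairArc k l, .radii i _ => crosses n k l i (i + dN n)
  | .radii i _, .diam j _ => crosses n i (i + dN n) j (j + dN n)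
  | .diam j _, .radii i _ => crosses n i (i + dN n) j (j + dN n)
  | .radii _ _, .radii _ _ => False

/-- Identification of representatives of one pair of arcs / coloured diameter / pair of radii. -/
def symEq (n : ℕ) : RElt n → RElt n → Prop
  | .pairArc i j, .pairArc k l =>
      (k = i ∧ l = j) ∨ (k = j ∧ l = i) ∨
      (k = i + dN n ∧ l = j + dN n) ∨ (k = j + dN n ∧ l = i + dN n)
  | .diam i c, .diam j c' => c = c' ∧ (j = i ∨ j = i + dN n)
  | .radii i c, .radii j c' => c = c' ∧ (j = i ∨ j = i + dN n)
  | _, _ => False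

/-- Elements allowed in a diagram of Dynkin type `D_n`: no radii, and pairs of
arcs must be internal non-diameter arcs (no edges, no degenerate arcs). -/
def IsProper {n : ℕ} : RElt n → Prop
  | .pairArc i j => i ≠ j ∧ j ≠ i + dN n ∧ j ≠ i + 1 ∧ i ≠ j + 1
  | .diam _ _ => True
  | .radii _ _ => False

/-- Closure under the symmetries identifying representatives. -/
def SymClosed {n : ℕ} (D : Set (RElt n)) : Prop :=
  (∀ i j, RElt.pairArc i j ∈ D →
    RElt.pairArc j i ∈ D ∧ RElt.pairArc (i + dN n) (j + dN n) ∈ D) ∧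
  (∀ i c, RElt.diam i c ∈ D → RElt.diam (i + dN n) c ∈ D)

/-- A diagram of Dynkin type `D_n`. -/
def IsDiagram {n : ℕ} (D : Set (RElt n)) : Prop :=
  (∀ e ∈ D, IsProper e) ∧ SymClosed D

/-- A non-crossing collection. -/
def NonCrossing {n : ℕ} (D : Set (RElt n)) : Prop :=
  ∀ e ∈ D, ∀ f ∈ D, ¬ crossElt n e f

/-- `nc D` : the elements of `A(P_{2n})` crossing no element of `D`. -/
def ncD (n : ℕ) (D : Set (RElt n)) : Set (RElt n) :=
  {e | IsProper e ∧ ∀ f ∈ D, ¬ crossElt n e f}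

def HasDiam {n : ℕ} (D : Set (RElt n)) : Prop := ∃ i c, RElt.diam i c ∈ D

/-- The replacement map `r_D`: the identity if `D` has no diameters; otherwise it
replaces a coloured diameter by the correspondingly coloured pair of radii, unless
the oppositely coloured diameter with the same endpoints also lies in `D`. -/
noncomputable def rD {n : ℕ} (D : Set (RElt n)) (x : RElt n) : RElt n :=
  if ¬ HasDiam D then x
  else match x with
    | .diam i c =>
        if RElt.diam i (!c) ∈ D ∨ RElt.diam (i + dN n) (!c) ∈ D then .diam i c
        else .radii i c
    | y => y

/-- Vertices of the `2n`-gon together with the central vertex `c` (`none`). -/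
abbrev V (n : ℕ) := Option (Vtx n)

/-- Rotation by π (fixing the centre). -/
def rot (n : ℕ) : V n → V n := Option.map (· + dN n)

/-- Position of a vertex in the plane (the centre at the origin). -/
noncomputable def pos (n : ℕ) : V n → ℂ
  | none => 0
  | some k => Complex.exp (2 * Real.pi * Complex.I * (k.val : ℂ) / (2 * n))

/-- The clockwise angle `∠(x,y,z) ∈ [0,2π)` covered when rotating the segment
`(x,y)` to the segment `(y,z)` clockwise about `y`. -/
noncomputable def ang (n : ℕ) (x y z : V n) : ℝ :=
  let a := Complex.arg ((pos n x - pos n y) / (pos n z - pos n y))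
  if 0 ≤ a then a else a + 2 * Real.pi

/-- The unordered segments underlying an element (both π-rotated copies). -/
def segs (n : ℕ) : RElt n → Set (Sym2 (V n))
  | .pairArc i j => {s(some i, some j), s(some (i + dN n), some (j + dN n))}
  | .diam i _ => {s(some i, some (i + dN n))}
  | .radii i _ => {s(some i, none), s(some (i + dN n), none)}

/-- A `D`-cell of Dynkin type `D_n`: a polygon `⟨d_1,…,d_k⟩`, `k ≥ 3`, with
pairwise distinct vertices in `{0,…,2n-1} ∪ {c}`, whose sides underlie elements
of `r_D(D)` or edges of the `2n`-gon, satisfying the angle-minimality condition. -/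
structure Cell (n : ℕ) (D : Set (RElt n)) where
  k : ℕ
  hk : 3 ≤ k
  d : ZMod k → V n
  inj : Function.Injective d
  sides : ∀ i : ZMod k,
    (∃ e ∈ D, s(d i, d (i + 1)) ∈ segs n (rD D e)) ∨
    (∃ j : Vtx n, s(d i, d (i + 1)) = s(some j, some (j + 1)))
  minAngle : ∀ (i : ZMod k) (v : V n), (∃ e ∈ D, s(d i, v) ∈ segs n (rD D e)) →
    0 < ang n (d (i - 1)) (d i) v →
    0 < ang n (d (i - 1)) (d i) (d (i + 1)) ∧
      ang n (d (i - 1)) (d i) (d (i + 1)) ≤ ang n (d (i - 1)) (d i) v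

/-- `e` is contained in (the pair of `D`-cells of) `C`: `r_D(e)` is a diagonal. -/
def containedIn {n : ℕ} {D : Set (RElt n)} (C : Cell n D) (e : RElt n) : Prop :=
  ∃ i j : ZMod C.k, j ≠ i - 1 ∧ j ≠ i ∧ j ≠ i + 1 ∧ s(C.d i, C.d j) ∈ segs n (rD D e)

/-- Two cells determine the same pair of `D`-cells. -/
def SamePair {n : ℕ} {D : Set (RElt n)} (C C' : Cell n D) : Prop :=
  Set.range C'.d = Set.range C.d ∨ Set.range C'.d = rot n '' Set.range C.d

/-- A π-rotation-invariant cell. -/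
def RotInv {n : ℕ} {D : Set (RElt n)} (C : Cell n D) : Prop :=
  Set.range C.d = rot n '' Set.range C.d

/-- The segment from `u` to `v` is a diameter. -/
def isDiamSeg (n : ℕ) (u v : V n) : Prop := ∃ a : Vtx n, u = some a ∧ v = some (a + dN n)

/-- The colour rules for mutation: whenever the mutated element `e'` is a coloured
diameter, its colour is prescribed according to the diameters of `D`. -/
def colourRule (n : ℕ) (D : Set (RElt n)) (e e' : RElt n) : Prop :=
  ∀ (i : Vtx n) (c' : Bool), e' = RElt.diam i c' →
    ((¬ HasDiam D → ∃ j c, e = RElt.diam j c ∧ c' = !c) ∧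
     ((∃ x y cx cy, RElt.diam x cx ∈ D ∧ RElt.diam y cy ∈ D ∧ y ≠ x ∧ y ≠ x + dN n) →
        ∀ cγ : Bool, (∃ z, RElt.diam z cγ ∈ D) → c' = cγ) ∧
     (∀ (x : Vtx n) (cγ : Bool), RElt.diam x cγ ∈ D →
        (∀ z cz, RElt.diam z cz ∈ D → (z = x ∨ z = x + dN n) ∧ cz = cγ) →
        (c' = !cγ ↔ (i = x ∨ i = x + dN n))))

/-- The mutation `μ_D` as a relation: `D` is fixed pointwise, and an element not in `D`,
contained in a pair of `D`-cells with `r_D`-image the diagonal `(d_i,d_j)`, is sent to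
the element with `r_D`-image `(d_{i+1},d_{j+1})`, colours as prescribed. -/
def MutStep (n : ℕ) (D : Set (RElt n)) (e e' : RElt n) : Prop :=
  (e ∈ D ∧ e' = e) ∨
  (e ∉ D ∧ ¬ isRadii e' ∧ ∃ (C : Cell n D) (i j : ZMod C.k),
    j ≠ i - 1 ∧ j ≠ i ∧ j ≠ i + 1 ∧
    s(C.d i, C.d j) ∈ segs n (rD D e) ∧
    s(C.d (i + 1), C.d (j + 1)) ∈ segs n (rD D e') ∧
    colourRule n D e e')

/-- The mutation `μ_D^-` as a relation (rotating diagonals clockwise). -/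
def MutStepInv (n : ℕ) (D : Set (RElt n)) (e e' : RElt n) : Prop :=
  (e ∈ D ∧ e' = e) ∨
  (e ∉ D ∧ ¬ isRadii e' ∧ ∃ (C : Cell n D) (i j : ZMod C.k),
    j ≠ i - 1 ∧ j ≠ i ∧ j ≠ i + 1 ∧
    s(C.d i, C.d j) ∈ segs n (rD D e) ∧
    s(C.d (i - 1), C.d (j - 1)) ∈ segs n (rD D e') ∧
    colourRule n D e e')

end DynkinD

/-!
Two diameters with different endpoints cross unless they have the same colour. So a diameter
that crosses neither of two same-coloured diameters of `D` with different endpoints has their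
colour. Applied to the diameters of `D`, this leaves no oppositely coloured diameter in `D`;
applied to a diameter of `nc D`, it gives that diameter the colour of `D`, so `r_D` has no
reason to keep it.
-/

namespace DynkinD

variable {n : ℕ}

lemma dN_val (hn : 0 < n) : (dN n).val = n := by
  have : NeZero (2 * n) := ⟨by omega⟩
  rw [dN, ZMod.val_natCast, Nat.mod_eq_of_lt (by omega)]

lemma dN_ne_zero (hn : 0 < n) : dN n ≠ 0 := by
  have : NeZero (2 * n) := ⟨by omega⟩
  intro h
  have := dN_val hn
  rw [h, ZMod.val_zero] at this
  omega

lemma dN_add_dN : dN n + dN n = 0 := by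
  have : dN n + dN n = ((2 * n : ℕ) : Vtx n) := by push_cast [dN]; ring
  rw [this, ZMod.natCast_self]

@[simp]
lemma add_dN_add_dN (x : Vtx n) : x + dN n + dN n = x := by
  rw [add_assoc, dN_add_dN, add_zero]

lemma eq_or_eq_add_dN_of_eq_or_eq_add_dN {x i j : Vtx n} (hi : x = i ∨ x = i + dN n)
    (hj : x = j ∨ x = j + dN n) : j = i ∨ j = i + dN n := by
  rcases hi with rfl | rfl <;> rcases hj with rfl | h
  · simp
  · exact Or.inr (by rw [h, add_dN_add_dN])
  · simp
  · exact Or.inl (add_right_cancel h).symm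

lemma btw_add_right {a x b : Vtx n} (t : Vtx n) :
    btw n (a + t) (x + t) (b + t) ↔ btw n a x b := by
  simp only [btw, add_sub_add_right_eq_sub]

lemma btw_antipode_of_val_sub_lt (hn : 0 < n) {a x : Vtx n} (hxa : x ≠ a)
    (hlt : (x - a).val < n) : btw n a x (a + dN n) ∧ btw n (a + dN n) (x + dN n) a := by
  have : NeZero (2 * n) := ⟨by omega⟩
  have h : btw n a x (a + dN n) :=
    ⟨ZMod.val_pos.mpr (sub_ne_zero.mpr hxa), by rwa [add_sub_cancel_left, dN_val hn]⟩
  refine ⟨h, ?_⟩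
  simpa using (btw_add_right (dN n)).mpr h

lemma val_sub_lt_or_val_sub_lt (hn : 0 < n) {x a : Vtx n} (h₁ : x ≠ a) (h₂ : x ≠ a + dN n) :
    (x - a).val < n ∨ (a - x).val < n := by
  have : NeZero (2 * n) := ⟨by omega⟩
  have hne : (x - a).val ≠ n := by
    intro h
    have : x - a = dN n := ZMod.val_injective _ (h.trans (dN_val hn).symm)
    exact h₂ (by linear_combination this)
  rcases lt_or_gt_of_ne hne with h | h
  · exact Or.inl h
  · right
    rw [← neg_sub, ZMod.neg_val, if_neg (sub_ne_zero.mpr h₁)]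
    omega

lemma crosses_diam (hn : 0 < n) {m i : Vtx n} (h₁ : m ≠ i) (h₂ : m ≠ i + dN n) :
    crosses n m (m + dN n) i (i + dN n) := by
  have hd := dN_ne_zero hn
  have h₂' : i ≠ m + dN n := fun h => h₂ (by rw [h, add_dN_add_dN])
  refine ⟨⟨fun h => hd (by linear_combination -h), h₁, h₂,
    fun h => h₂ (by rw [← h, add_dN_add_dN]), fun h => h₁ (add_right_cancel h),
    fun h => hd (by linear_combination -h)⟩, ?_⟩
  rcases val_sub_lt_or_val_sub_lt hn h₁.symm h₂' with h | h
  · exact Or.inl (btw_antipode_of_val_sub_lt hn h₁.symm h)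
  · exact Or.inr (btw_antipode_of_val_sub_lt hn h₁ h)

lemma eq_or_eq_add_dN_of_not_crossElt (hn : 0 < n) {m i : Vtx n} {c c' : Bool} (hc : c ≠ c')
    (h : ¬ crossElt n (.diam m c) (.diam i c')) : m = i ∨ m = i + dN n := by
  by_contra! hm
  exact h ⟨hc, crosses_diam hn hm.1 hm.2⟩

lemma colour_eq_of_not_crossElt_diam (hn : 0 < n) {i j x : Vtx n} {c γ : Bool}
    (hne : j ≠ i ∧ j ≠ i + dN n) (hi : ¬ crossElt n (.diam x c) (.diam i γ))
    (hj : ¬ crossElt n (.diam x c) (.diam j γ)) : c = γ := by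
  by_contra hc
  rcases eq_or_eq_add_dN_of_eq_or_eq_add_dN (eq_or_eq_add_dN_of_not_crossElt hn hc hi)
    (eq_or_eq_add_dN_of_not_crossElt hn hc hj) with h | h
  exacts [hne.1 h, hne.2 h]

lemma NonCrossing.colour_eq_of_diam_mem (hn : 0 < n) {D : Set (RElt n)} (hnc : NonCrossing D)
    {i j x : Vtx n} {c γ : Bool} (hi : RElt.diam i γ ∈ D) (hj : RElt.diam j γ ∈ D)
    (hne : j ≠ i ∧ j ≠ i + dN n) (hx : RElt.diam x c ∈ D) : c = γ :=
  colour_eq_of_not_crossElt_diam hn hne (hnc _ hx _ hi) (hnc _ hx _ hj)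

lemma rD_diam_of_not_mem {D : Set (RElt n)} (hD : HasDiam D) {m : Vtx n} {c : Bool}
    (h : RElt.diam m (!c) ∉ D) (h' : RElt.diam (m + dN n) (!c) ∉ D) :
    rD D (.diam m c) = .radii m c := by
  rw [rD, if_neg (not_not.mpr hD)]
  exact if_neg (not_or.mpr ⟨h, h'⟩)

end DynkinD

open DynkinD in
theorem stmt_18_general (n : ℕ) (hn : 4 ≤ n) (D : Set (RElt n))
    (hnc : NonCrossing D)
    (i j : Vtx n) (γ : Bool)
    (hi : RElt.diam i γ ∈ D) (hj : RElt.diam j γ ∈ D)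
    (hne : j ≠ i ∧ j ≠ i + dN n)
    (m : Vtx n) (c : Bool)
    (hm : RElt.diam m c ∈ ncD n D) :
    ∃ (x : Vtx n) (c₀ : Bool), rD D (RElt.diam m c) = RElt.radii x c₀ := by
  have hn₀ : 0 < n := by omega
  obtain rfl : c = γ := colour_eq_of_not_crossElt_diam hn₀ hne (hm.2 _ hi) (hm.2 _ hj)
  have hopp : ∀ x, RElt.diam x (!c) ∉ D := fun x hx =>
    Bool.not_ne_self c (hnc.colour_eq_of_diam_mem hn₀ hi hj hne hx)
  exact ⟨m, c, rD_diam_of_not_mem ⟨i, c, hi⟩ (hopp m) (hopp _)⟩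

open DynkinD in
/-- If a non-crossing diagram `D` contains two distinct same-coloured diameters, then
every coloured diameter of `nc D \ D` is replaced by a pair of radii under `r_D`. -/
theorem stmt_18 (n : ℕ) (hn : 4 ≤ n) (D : Set (RElt n))
    (hD : IsDiagram D) (hnc : NonCrossing D)
    (i j : Vtx n) (γ : Bool)
    (hi : RElt.diam i γ ∈ D) (hj : RElt.diam j γ ∈ D)
    (hne : j ≠ i ∧ j ≠ i + dN n)
    (m : Vtx n) (c : Bool)
    (hm : RElt.diam m c ∈ ncD n D) (hm' : RElt.diam m c ∉ D) :
    ∃ (x : Vtx n) (c₀ : Bool), rD D (RElt.diam m c) = RElt.radii x c₀ :=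
  stmt_18_general n hn D hnc i j γ hi hj hne m c hm
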